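/- arXiv:1903.01756 — 2 statements merged into one kernel-verified Lean document; each statement's English description precedes it below -/
import Mathlib

section
/- Suppose θ < 0, G has no 0-cycles, and G' has no negative cycle. Let T be an SPT of G rooted at s, let T' be any SPT of G' rooted at s, and let T* be the spanning tree obtained from T' by repeatedly merging pairs of linked branches having the same δ value (merging linked branches B₁ and B₂ via a T-edge (u₁, u₂) with u₁ ∈ B₁ and u₂ ∈ B₂, so that u₂ is the miniroot of B₂, means changing the parent of u₂ in the current tree to u₁) until no two linked branches have the same δ value. Then T* is an SPT of G' and T* has the minimal number of edge changes with respect to T among all SPTs of G', where an edge of a spanning tree of G' counts as changed if it is not an edge of T or if it equals the weight-modified edge e₀. -/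
namespace DynSPT

variable {V : Type*}

/-- The list of consecutive edges of a path given as a list of vertices. -/
def edgeList (l : List V) : List (V × V) := l.zip l.tail

/-- The length of a path with respect to the weight function `ω`. -/
def len (ω : V → V → ℝ) (l : List V) : ℝ :=
  ((edgeList l).map fun p => ω p.1 p.2).sum

/-- `l` is a path in the directed graph with edge relation `E`. -/
def IsWalk (E : V → V → Prop) (l : List V) : Prop := l ≠ [] ∧ l.Chain' E

/-- `l` is a path from `u` to `v` in the directed graph with edge relation `E`. -/
def IsWalkFrom (E : V → V → Prop) (l : List V) (u v : V) : Prop :=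
  IsWalk E l ∧ l.head? = some u ∧ l.getLast? = some v

/-- The path `l` traverses the edge `e`. -/
def Traverses (l : List V) (e : V × V) : Prop := e ∈ edgeList l

/-- `l` is a cycle: a path with at least one edge whose first and last vertices agree. -/
def IsCycle (E : V → V → Prop) (l : List V) : Prop :=
  ∃ v, IsWalkFrom E l v v ∧ 2 ≤ l.length

/-- The weighted directed graph `(E, ω)` has a negative cycle. -/
def HasNegCycle (E : V → V → Prop) (ω : V → V → ℝ) : Prop :=
  ∃ l, IsCycle E l ∧ len ω l < 0

/-- The weighted directed graph `(E, ω)` has a zero-length cycle. -/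
def HasZeroCycle (E : V → V → Prop) (ω : V → V → ℝ) : Prop :=
  ∃ l, IsCycle E l ∧ len ω l = 0

/-- The distance from `s` to `v`: the infimum of the lengths of paths from `s` to `v`. -/
noncomputable def dist (E : V → V → Prop) (ω : V → V → ℝ) (s v : V) : ℝ :=
  sInf {L : ℝ | ∃ l, IsWalkFrom E l s v ∧ len ω l = L}

/-- A spanning tree of the directed graph `E` rooted at `s`, recorded by the parent
function together with, for every vertex `v`, the tree path from `s` to `v`. -/
structure RootedTree (E : V → V → Prop) (s : V) where
  parent : V → V
  path : V → List V
  path_root : path s = [s]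
  parent_edge : ∀ v, v ≠ s → E (parent v) v
  path_eq : ∀ v, v ≠ s → path v = path (parent v) ++ [v]
  path_isWalkFrom : ∀ v, IsWalkFrom E (path v) s v

/-- `(a, b)` is an edge of the rooted tree `T`. -/
def RootedTree.IsEdge {E : V → V → Prop} {s : V} (T : RootedTree E s) (a b : V) : Prop :=
  b ≠ s ∧ T.parent b = a

/-- `T` is a shortest-path tree for the weight function `ω`:
every tree path from the root is a shortest path. -/
def IsSPT {E : V → V → Prop} {s : V} (ω : V → V → ℝ) (T : RootedTree E s) : Prop :=
  ∀ v, len ω (T.path v) = dist E ω s v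

/-- The tree edge of `Th` into `v` is kept when forming `Th`-branches: it is an
edge of the old tree `T` and is not the modified edge `(x₀, y₀)`. -/
def Kept {E : V → V → Prop} {s : V} (T Th : RootedTree E s) (x₀ y₀ v : V) : Prop :=
  v ≠ s ∧ T.IsEdge (Th.parent v) v ∧ (Th.parent v, v) ≠ (x₀, y₀)

/-- `v` belongs to the `Th`-branch with miniroot `m`: `m` is an ancestor of `v` in `Th`
and every tree edge on the segment of the tree path from `m` to `v` is kept. -/
def InBranch {E : V → V → Prop} {s : V} (T Th : RootedTree E s) (x₀ y₀ m v : V) : Prop :=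
  ∃ l, Th.path v = Th.path m ++ l ∧ ∀ w ∈ l, Kept T Th x₀ y₀ w

/-- `m` is the miniroot of a `Th`-branch: the tree edge of `Th` into `m` is not kept
(in particular this holds for the root `s`). -/
def IsMiniroot {E : V → V → Prop} {s : V} (T Th : RootedTree E s) (x₀ y₀ m : V) : Prop :=
  ¬ Kept T Th x₀ y₀ m

/-- One merge step: two distinct linked branches of `T₁` (with miniroots `m₁`, `m₂`,
linked via the `T`-edge `(u₁, m₂)` with `u₁` in the branch of `m₁`) having the same
`δ` value are merged by changing the parent of `m₂` to `u₁`. -/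
def MergeStep {E : V → V → Prop} {s : V} [DecidableEq V] (ω ω' : V → V → ℝ)
    (T : RootedTree E s) (x₀ y₀ : V) (T₁ T₂ : RootedTree E s) : Prop :=
  ∃ m₁ m₂ u₁, IsMiniroot T T₁ x₀ y₀ m₁ ∧ IsMiniroot T T₁ x₀ y₀ m₂ ∧ m₁ ≠ m₂ ∧
    InBranch T T₁ x₀ y₀ m₁ u₁ ∧ T.IsEdge u₁ m₂ ∧
    dist E ω' s m₁ - dist E ω s m₁ = dist E ω' s m₂ - dist E ω s m₂ ∧
    T₂.parent = Function.update T₁.parent m₂ u₁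

/-- No two distinct linked branches of `T₁` have the same `δ` value. -/
def NoMergeable {E : V → V → Prop} {s : V} (ω ω' : V → V → ℝ)
    (T : RootedTree E s) (x₀ y₀ : V) (T₁ : RootedTree E s) : Prop :=
  ¬ ∃ m₁ m₂ u₁ u₂, IsMiniroot T T₁ x₀ y₀ m₁ ∧ IsMiniroot T T₁ x₀ y₀ m₂ ∧ m₁ ≠ m₂ ∧
      dist E ω' s m₁ - dist E ω s m₁ = dist E ω' s m₂ - dist E ω s m₂ ∧
      T.IsEdge u₁ u₂ ∧
      ((InBranch T T₁ x₀ y₀ m₁ u₁ ∧ InBranch T T₁ x₀ y₀ m₂ u₂) ∨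
        (InBranch T T₁ x₀ y₀ m₂ u₁ ∧ InBranch T T₁ x₀ y₀ m₁ u₂))

/-- The number of changed edges of a spanning tree `Th` of the updated graph with
respect to the old SPT `T`: a tree edge counts as changed if it is not an edge of `T`
or if it is the weight-modified edge `(x₀, y₀)`. -/
noncomputable def changedCount {E : V → V → Prop} {s : V} (T Th : RootedTree E s)
    (x₀ y₀ : V) : ℕ :=
  Set.ncard {v | v ≠ s ∧ (¬ T.IsEdge (Th.parent v) v ∨ (Th.parent v, v) = (x₀, y₀))}


/-! ### Auxiliary lemmas -/

section Aux

lemma edgeList_singleton (x : V) : edgeList [x] = [] := rfl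

lemma edgeList_cons_cons (a b : V) (t : List V) :
    edgeList (a :: b :: t) = (a, b) :: edgeList (b :: t) := rfl

lemma edgeList_append_cons (p : List V) (x : V) (q : List V) :
    edgeList (p ++ x :: q) = edgeList (p ++ [x]) ++ edgeList (x :: q) := by
  induction p with
  | nil => simp [edgeList_singleton]
  | cons a p ih =>
    cases p with
    | nil => simp [edgeList_cons_cons, edgeList_singleton]
    | cons b p' => simpa [edgeList_cons_cons] using ih

lemma len_append_cons (ω : V → V → ℝ) (p : List V) (x : V) (q : List V) :
    len ω (p ++ x :: q) = len ω (p ++ [x]) + len ω (x :: q) := by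
  rw [len, edgeList_append_cons, List.map_append, List.sum_append]; rfl

lemma len_pair (ω : V → V → ℝ) (u v : V) : len ω [u, v] = ω u v := by
  simp [len, edgeList_cons_cons, edgeList_singleton]

lemma len_concat (ω : V → V → ℝ) {l : List V} {u : V} (v : V) (h : l.getLast? = some u) :
    len ω (l ++ [v]) = len ω l + ω u v := by
  obtain ⟨l', rfl⟩ : ∃ l', l = l' ++ [u] := by
    rcases List.getLast?_eq_some_iff.mp h with ⟨l', rfl⟩
    exact ⟨l', rfl⟩
  have h1 : l' ++ [u] ++ [v] = l' ++ u :: [v] := by simp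
  rw [h1, len_append_cons ω l' u [v], len_pair]

lemma exists_dup_split {l : List V} (h : ¬ l.Nodup) :
    ∃ (a : List V) (x : V) (b c : List V), l = a ++ x :: b ++ x :: c := by
  induction l with
  | nil => simp at h
  | cons y t ih =>
    rw [List.nodup_cons] at h
    by_cases hy : y ∈ t
    · obtain ⟨b, c, rfl⟩ := List.append_of_mem hy
      exact ⟨[], y, b, c, rfl⟩
    · have ht : ¬ t.Nodup := by tauto
      obtain ⟨a, x, b, c, rfl⟩ := ih ht
      exact ⟨y :: a, x, b, c, rfl⟩

lemma list_sum_ge {M : ℝ} (f : V × V → ℝ) :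
    ∀ L : List (V × V), (∀ z ∈ L, -M ≤ f z) → -(L.length * M) ≤ (L.map f).sum := by
  intro L
  induction L with
  | nil => simp
  | cons a t ih =>
    intro h
    have h1 := h a (by simp)
    have h2 := ih (fun z hz => h z (by simp [hz]))
    simp only [List.map_cons, List.sum_cons, List.length_cons]
    push_cast
    linarith

lemma edgeList_length_le (l : List V) : (edgeList l).length ≤ l.length := by
  simp [edgeList]

lemma chain_len_lb [Fintype V] (E : V → V → Prop) (ω' : V → V → ℝ)
    (hG' : ¬ HasNegCycle E ω') :
    ∃ c : ℝ, ∀ l : List V, l.Chain' E → c ≤ len ω' l := by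
  classical
  set M : ℝ := ∑ p : V × V, |ω' p.1 p.2| with hM
  have hM0 : 0 ≤ M := Finset.sum_nonneg fun p _ => abs_nonneg _
  have hMle : ∀ a b : V, -M ≤ ω' a b := by
    intro a b
    have h1 : |ω' a b| ≤ M :=
      Finset.single_le_sum (f := fun p : V × V => |ω' p.1 p.2|)
        (fun p _ => abs_nonneg _) (Finset.mem_univ (a, b))
    have := neg_abs_le (ω' a b)
    linarith
  set n : ℕ := Fintype.card V with hn
  refine ⟨-(n * M), ?_⟩
  suffices key : ∀ k : ℕ, ∀ l : List V, l.length ≤ k → l.Chain' E → -(n * M) ≤ len ω' l by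
    exact fun l hl => key l.length l le_rfl hl
  intro k
  induction k with
  | zero =>
    intro l hl _
    interval_cases h : l.length
    · rw [List.length_eq_zero_iff] at h; subst h
      simp [len, edgeList]
      positivity
  | succ k ih =>
    intro l hlen hch
    by_cases hnd : l.Nodup
    · have h1 : -((l.length : ℝ) * M) ≤ len ω' l := by
        have := list_sum_ge (M := M) (fun p : V × V => ω' p.1 p.2) (edgeList l)
          (fun z _ => hMle z.1 z.2)
        have h2 : ((edgeList l).length : ℝ) * M ≤ (l.length : ℝ) * M := by
          have := edgeList_length_le l
          apply mul_le_mul_of_nonneg_right _ hM0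
          exact_mod_cast this
        unfold len
        linarith
      have h2 : (l.length : ℝ) ≤ (n : ℝ) := by
        exact_mod_cast hnd.length_le_card
      have h3 : (l.length : ℝ) * M ≤ (n : ℝ) * M := mul_le_mul_of_nonneg_right h2 hM0
      linarith
    · obtain ⟨a, x, b, c, rfl⟩ := exists_dup_split hnd
      -- l = (a ++ x :: b) ++ x :: c
      obtain ⟨C1, C2⟩ := List.isChain_split.mp hch
      have hre : (a ++ x :: b) ++ [x] = a ++ x :: (b ++ [x]) := by simp
      rw [hre] at C1
      obtain ⟨C3, C4⟩ := List.isChain_split.mp C1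
      have hch' : (a ++ x :: c).Chain' E := List.isChain_split.mpr ⟨C3, C2⟩
      have hcyc : 0 ≤ len ω' (x :: (b ++ [x])) := by
        by_contra hneg
        push_neg at hneg
        refine hG' ⟨x :: (b ++ [x]), ⟨x, ⟨⟨by simp, C4⟩, by simp, ?_⟩, by simp⟩, hneg⟩
        rw [show x :: (b ++ [x]) = (x :: b) ++ [x] by simp]
        exact List.getLast?_concat
      have e1 : len ω' ((a ++ x :: b) ++ x :: c)
          = (len ω' (a ++ [x]) + len ω' (x :: (b ++ [x]))) + len ω' (x :: c) := by
        rw [len_append_cons ω' (a ++ x :: b) x c, hre, len_append_cons ω' a x (b ++ [x])]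
      have e2 : len ω' (a ++ x :: c) = len ω' (a ++ [x]) + len ω' (x :: c) :=
        len_append_cons ω' a x c
      have hlen' : (a ++ x :: c).length ≤ k := by
        simp only [List.length_append, List.length_cons] at hlen ⊢
        omega
      have := ih (a ++ x :: c) hlen' hch'
      linarith

variable {E : V → V → Prop} {s : V}

lemma dist_le_len [Fintype V] {ω' : V → V → ℝ} (hG' : ¬ HasNegCycle E ω')
    {l : List V} {v : V} (h : IsWalkFrom E l s v) :
    dist E ω' s v ≤ len ω' l := by
  obtain ⟨c, hc⟩ := chain_len_lb E ω' hG'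
  exact csInf_le ⟨c, fun L ⟨l', hl', hL⟩ => hL ▸ hc l' hl'.1.2⟩ ⟨l, h, rfl⟩

lemma RootedTree.path_ne_nil (T : RootedTree E s) (v : V) : T.path v ≠ [] :=
  (T.path_isWalkFrom v).1.1

lemma RootedTree.getLast?_path (T : RootedTree E s) (v : V) :
    (T.path v).getLast? = some v :=
  (T.path_isWalkFrom v).2.2

lemma RootedTree.path_injective (T : RootedTree E s) {u v : V}
    (h : T.path u = T.path v) : u = v := by
  have h1 := T.getLast?_path u
  have h2 := T.getLast?_path v
  rw [h, h2] at h1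
  exact (Option.some_injective _ h1).symm

lemma spt_parent {ω : V → V → ℝ} {Th : RootedTree E s} (h : IsSPT ω Th) {v : V}
    (hv : v ≠ s) :
    dist E ω s v = dist E ω s (Th.parent v) + ω (Th.parent v) v := by
  rw [← h v, ← h (Th.parent v), Th.path_eq v hv,
    len_concat ω v (Th.getLast?_path (Th.parent v))]

lemma walkFrom_concat {l : List V} {u v : V} (h : IsWalkFrom E l s u) (he : E u v) :
    IsWalkFrom E (l ++ [v]) s v := by
  obtain ⟨⟨hne, hch⟩, hhd, hlast⟩ := h
  refine ⟨⟨by simp, ?_⟩, ?_, List.getLast?_concat⟩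
  · show List.IsChain E (l ++ [v]); rw [List.isChain_append]
    refine ⟨hch, List.isChain_singleton v, ?_⟩
    intro x hx y hy
    rw [hlast] at hx
    simp at hx hy
    subst hx; subst hy; exact he
  · cases l with
    | nil => exact absurd rfl hne
    | cons a t => simpa using hhd

/-- The auxiliary relation: `(a, b)` is a `T`-edge different from the modified edge
whose endpoints have the same `δ` value. -/
def Hrel (E : V → V → Prop) (ω ω' : V → V → ℝ) (s x₀ y₀ : V) (T : RootedTree E s)
    (a b : V) : Prop :=
  T.IsEdge a b ∧ (a, b) ≠ (x₀, y₀) ∧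
    dist E ω' s a - dist E ω s a = dist E ω' s b - dist E ω s b

/-- Connectivity via `Hrel` edges in either direction. -/
def Hconn (E : V → V → Prop) (ω ω' : V → V → ℝ) (s x₀ y₀ : V) (T : RootedTree E s) :
    V → V → Prop :=
  Relation.ReflTransGen (fun a b => Hrel E ω ω' s x₀ y₀ T a b ∨ Hrel E ω ω' s x₀ y₀ T b a)

variable {ω ω' : V → V → ℝ} {x₀ y₀ : V} {T : RootedTree E s}

lemma Hconn.delta {a b : V} (h : Hconn E ω ω' s x₀ y₀ T a b) :
    dist E ω' s a - dist E ω s a = dist E ω' s b - dist E ω s b := by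
  induction h with
  | refl => rfl
  | tail _ hbc ih => rcases hbc with h' | h' <;> rw [ih] <;> [exact h'.2.2; exact h'.2.2.symm]

lemma Hconn.symm {a b : V} (h : Hconn E ω ω' s x₀ y₀ T a b) :
    Hconn E ω ω' s x₀ y₀ T b a :=
  by haveI : Std.Symm (fun a b => Hrel E ω ω' s x₀ y₀ T a b ∨ Hrel E ω ω' s x₀ y₀ T b a) := ⟨fun _ _ h => h.symm⟩; exact Relation.ReflTransGen.symmetric.symm _ _ h

lemma kept_hrel (hω' : ∀ a b, (a, b) ≠ (x₀, y₀) → ω' a b = ω a b)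
    {Th : RootedTree E s} (hT : IsSPT ω T) (hTh : IsSPT ω' Th) {v : V}
    (hk : Kept T Th x₀ y₀ v) : Hrel E ω ω' s x₀ y₀ T (Th.parent v) v := by
  obtain ⟨hv, hedge, hne⟩ := hk
  refine ⟨hedge, hne, ?_⟩
  have h1 : dist E ω' s v = dist E ω' s (Th.parent v) + ω' (Th.parent v) v :=
    spt_parent hTh hv
  have h2 : dist E ω s v = dist E ω s (Th.parent v) + ω (Th.parent v) v := by
    have h3 := spt_parent hT hv
    rwa [hedge.2] at h3
  have h4 : ω' (Th.parent v) v = ω (Th.parent v) v := hω' _ _ hne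
  linarith

lemma inBranch_hconn (hω' : ∀ a b, (a, b) ≠ (x₀, y₀) → ω' a b = ω a b)
    {Th : RootedTree E s} (hT : IsSPT ω T) (hTh : IsSPT ω' Th) {m : V} :
    ∀ (l : List V) (v : V), Th.path v = Th.path m ++ l →
      (∀ w ∈ l, Kept T Th x₀ y₀ w) → Hconn E ω ω' s x₀ y₀ T m v := by
  intro l
  induction l using List.reverseRecOn with
  | nil =>
    intro v h _
    rw [List.append_nil] at h
    rw [Th.path_injective h]
    exact Relation.ReflTransGen.refl
  | append_singleton l' w ih =>
    intro v h hk
    have hvw : v = w := by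
      have h1 := Th.getLast?_path v
      rw [h, ← List.append_assoc, List.getLast?_concat] at h1
      exact (Option.some_injective _ h1).symm
    subst hvw
    have hkv : Kept T Th x₀ y₀ v := hk v (by simp)
    have hvs : v ≠ s := hkv.1
    have hpe := Th.path_eq v hvs
    have h2 : Th.path (Th.parent v) = Th.path m ++ l' := by
      have h3 : Th.path (Th.parent v) ++ [v] = (Th.path m ++ l') ++ [v] := by
        rw [← hpe, h, List.append_assoc]
      exact List.append_cancel_right h3
    have hcm : Hconn E ω ω' s x₀ y₀ T m (Th.parent v) :=
      ih (Th.parent v) h2 (fun w hw => hk w (by simp [hw]))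
    exact hcm.tail (Or.inl (kept_hrel hω' hT hTh hkv))

lemma inBranch_hconn' (hω' : ∀ a b, (a, b) ≠ (x₀, y₀) → ω' a b = ω a b)
    {Th : RootedTree E s} (hT : IsSPT ω T) (hTh : IsSPT ω' Th) {m v : V}
    (h : InBranch T Th x₀ y₀ m v) : Hconn E ω ω' s x₀ y₀ T m v := by
  obtain ⟨l, hl, hk⟩ := h
  exact inBranch_hconn hω' hT hTh l v hl hk

lemma exists_miniroot (Th : RootedTree E s) (v : V) :
    ∃ m, IsMiniroot T Th x₀ y₀ m ∧ InBranch T Th x₀ y₀ m v := by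
  suffices key : ∀ (k : ℕ) (v : V), (Th.path v).length ≤ k →
      ∃ m, IsMiniroot T Th x₀ y₀ m ∧ InBranch T Th x₀ y₀ m v from
    key (Th.path v).length v le_rfl
  intro k
  induction k with
  | zero =>
    intro v hl
    exact absurd (List.length_eq_zero_iff.mp (Nat.le_zero.mp hl)) (Th.path_ne_nil v)
  | succ k ih =>
    intro v hl
    by_cases hk : Kept T Th x₀ y₀ v
    · have hvs : v ≠ s := hk.1
      have hpe := Th.path_eq v hvs
      have hlp : (Th.path (Th.parent v)).length ≤ k := by
        rw [hpe] at hl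
        simp at hl
        omega
      obtain ⟨m, hm, l, hbl, hbk⟩ := ih (Th.parent v) hlp
      refine ⟨m, hm, l ++ [v], ?_, ?_⟩
      · rw [hpe, hbl, List.append_assoc]
      · intro w hw
        rcases List.mem_append.mp hw with hw | hw
        · exact hbk w hw
        · simp at hw; subst hw; exact hk
    · exact ⟨v, hk, [], by simp, by simp⟩

lemma miniroot_unique_aux {Th : RootedTree E s} {m m' : V}
    (hm' : IsMiniroot T Th x₀ y₀ m') {r : List V}
    (hr : Th.path m' = Th.path m ++ r) (hk : ∀ w ∈ r, Kept T Th x₀ y₀ w) :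
    m' = m := by
  cases r with
  | nil =>
    rw [List.append_nil] at hr
    exact Th.path_injective hr
  | cons a t =>
    exfalso
    have h1 := Th.getLast?_path m'
    rw [hr, List.getLast?_append] at h1
    have h2 : (a :: t).getLast? = some m' := by
      rcases h3 : (a :: t).getLast? with _ | z
      · simp [List.getLast?] at h3
      · rw [h3] at h1; simpa using h1
    have h4 : m' ∈ a :: t := by
      obtain ⟨l', hl'⟩ := List.getLast?_eq_some_iff.mp h2
      rw [hl']; simp
    exact hm' (hk m' h4)

lemma miniroot_unique {Th : RootedTree E s} {m m' v : V}
    (hm : IsMiniroot T Th x₀ y₀ m) (hm' : IsMiniroot T Th x₀ y₀ m')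
    (hb : InBranch T Th x₀ y₀ m v) (hb' : InBranch T Th x₀ y₀ m' v) : m = m' := by
  obtain ⟨l, hl, hk⟩ := hb
  obtain ⟨l', hl', hk'⟩ := hb'
  have h : Th.path m ++ l = Th.path m' ++ l' := by rw [← hl, ← hl']
  rcases List.append_eq_append_iff.mp h with ⟨r, hr, hlr⟩ | ⟨r, hr, hlr⟩
  · exact (miniroot_unique_aux hm' hr (fun w hw => hk w (hlr ▸ List.mem_append_left _ hw))).symm
  · exact miniroot_unique_aux hm hr (fun w hw => hk' w (hlr ▸ List.mem_append_left _ hw))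

lemma root_miniroot (Th : RootedTree E s) : IsMiniroot T Th x₀ y₀ s :=
  fun hk => hk.1 rfl

lemma inBranch_self {Th : RootedTree E s} (v : V) : InBranch T Th x₀ y₀ v v :=
  ⟨[], by simp, by simp⟩

/-- A merge step preserves the shortest-path-tree property. -/
lemma mergeStep_spt [Fintype V] [DecidableEq V]
    (hω' : ∀ a b, (a, b) ≠ (x₀, y₀) → ω' a b = ω a b)
    (hθ : ω' x₀ y₀ - ω x₀ y₀ < 0) (hG' : ¬ HasNegCycle E ω')
    (hT : IsSPT ω T) {T₁ T₂ : RootedTree E s} (h₁ : IsSPT ω' T₁)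
    (hstep : MergeStep ω ω' T x₀ y₀ T₁ T₂) : IsSPT ω' T₂ := by
  obtain ⟨m₁, m₂, u₁, hmr1, hmr2, hne12, hbr, hedge, hdelta, hparent⟩ := hstep
  have hm₂s : m₂ ≠ s := hedge.1
  have hdm₂ : dist E ω s m₂ = dist E ω s u₁ + ω u₁ m₂ := by
    have h2 := spt_parent hT hm₂s
    rwa [hedge.2] at h2
  have hδu : dist E ω' s u₁ - dist E ω s u₁ = dist E ω' s m₁ - dist E ω s m₁ :=
    ((inBranch_hconn' hω' hT h₁ hbr).delta).symm
  have hkey : dist E ω' s m₂ = dist E ω' s u₁ + ω u₁ m₂ := by linarith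
  by_cases he : (u₁, m₂) = (x₀, y₀)
  · exfalso
    have hEe : E u₁ m₂ := by
      have h3 := T.parent_edge m₂ hm₂s
      rwa [hedge.2] at h3
    have hwalk : IsWalkFrom E (T₁.path u₁ ++ [m₂]) s m₂ :=
      walkFrom_concat (T₁.path_isWalkFrom u₁) hEe
    have hlen : len ω' (T₁.path u₁ ++ [m₂]) = dist E ω' s u₁ + ω' u₁ m₂ := by
      rw [len_concat ω' m₂ (T₁.getLast?_path u₁), h₁ u₁]
    have hle := dist_le_len hG' hwalk
    have hu : u₁ = x₀ := congrArg Prod.fst he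
    have hm : m₂ = y₀ := congrArg Prod.snd he
    subst hu; subst hm
    rw [hlen] at hle
    linarith
  · have hω'e : ω' u₁ m₂ = ω u₁ m₂ := hω' _ _ he
    suffices key : ∀ (k : ℕ) (v : V), (T₂.path v).length ≤ k →
        len ω' (T₂.path v) = dist E ω' s v from fun v => key (T₂.path v).length v le_rfl
    intro k
    induction k with
    | zero =>
      intro v hl
      exact absurd (List.length_eq_zero_iff.mp (Nat.le_zero.mp hl)) (T₂.path_ne_nil v)
    | succ k ih =>
      intro v hl
      by_cases hv : v = s
      · rw [hv, T₂.path_root, ← T₁.path_root, h₁ s]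
      · have hpe := T₂.path_eq v hv
        have hlp : (T₂.path (T₂.parent v)).length ≤ k := by
          rw [hpe] at hl; simp at hl; omega
        have ihp := ih (T₂.parent v) hlp
        have hlv : len ω' (T₂.path v)
            = len ω' (T₂.path (T₂.parent v)) + ω' (T₂.parent v) v := by
          rw [hpe, len_concat ω' v (T₂.getLast?_path (T₂.parent v))]
        rw [hlv, ihp]
        by_cases hvm : v = m₂
        · subst hvm
          have hp : T₂.parent v = u₁ := by rw [hparent]; simp
          rw [hp, hω'e]
          exact hkey.symm
        · have hp : T₂.parent v = T₁.parent v := by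
            rw [hparent, Function.update_of_ne hvm]
          rw [hp]
          exact (spt_parent h₁ hv).symm

end Aux

theorem statement_10
    {V : Type*} [Fintype V] [DecidableEq V] (E : V → V → Prop) (ω ω' : V → V → ℝ)
    (s x₀ y₀ : V)
    (hE₀ : E x₀ y₀)
    (hreach : ∀ v, ∃ l, IsWalkFrom E l s v)
    (hω' : ∀ a b, (a, b) ≠ (x₀, y₀) → ω' a b = ω a b)
    (hG : ¬ HasNegCycle E ω)
    (hθ : ω' x₀ y₀ - ω x₀ y₀ < 0)
    (hzero : ¬ HasZeroCycle E ω) (hG' : ¬ HasNegCycle E ω')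
    (T : RootedTree E s) (hT : IsSPT ω T)
    (T' Tstar : RootedTree E s) (hT' : IsSPT ω' T')
    (hmerge : Relation.ReflTransGen (MergeStep ω ω' T x₀ y₀) T' Tstar)
    (hterm : NoMergeable ω ω' T x₀ y₀ Tstar) :
    IsSPT ω' Tstar ∧
      ∀ T'' : RootedTree E s, IsSPT ω' T'' →
        changedCount T Tstar x₀ y₀ ≤ changedCount T T'' x₀ y₀ := by
  classical
  have hTstar : IsSPT ω' Tstar := by
    clear hterm
    induction hmerge with
    | refl => exact hT'
    | tail _ hbc ih => exact mergeStep_spt hω' hθ hG' hT ih hbc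
  refine ⟨hTstar, fun T'' hT'' => ?_⟩
  have hset : ∀ Th : RootedTree E s,
      {v | v ≠ s ∧ (¬ T.IsEdge (Th.parent v) v ∨ (Th.parent v, v) = (x₀, y₀))}
        = {v | v ≠ s ∧ IsMiniroot T Th x₀ y₀ v} := by
    intro Th; ext v
    simp only [Set.mem_setOf_eq, IsMiniroot, Kept]
    tauto
  rw [changedCount, changedCount, hset, hset]
  choose f hf1 hf2 using fun v => exists_miniroot (T := T) (x₀ := x₀) (y₀ := y₀) Tstar v
  have hstep : ∀ a b, (Hrel E ω ω' s x₀ y₀ T a b ∨ Hrel E ω ω' s x₀ y₀ T b a) →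
      f a = f b := by
    intro a b hab
    by_contra hne
    have hca := (inBranch_hconn' hω' hT hTstar (hf2 a)).delta
    have hcb := (inBranch_hconn' hω' hT hTstar (hf2 b)).delta
    have hδab : dist E ω' s a - dist E ω s a = dist E ω' s b - dist E ω s b := by
      rcases hab with h | h
      exacts [h.2.2, h.2.2.symm]
    have hδ : dist E ω' s (f a) - dist E ω s (f a)
        = dist E ω' s (f b) - dist E ω s (f b) := by linarith
    rcases hab with h | h
    · exact hterm ⟨f a, f b, a, b, hf1 a, hf1 b, hne, hδ, h.1, Or.inl ⟨hf2 a, hf2 b⟩⟩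
    · exact hterm ⟨f a, f b, b, a, hf1 a, hf1 b, hne, hδ, h.1, Or.inr ⟨hf2 b, hf2 a⟩⟩
  have hconst : ∀ a b, Hconn E ω ω' s x₀ y₀ T a b → f a = f b := by
    intro a b h
    induction h with
    | refl => rfl
    | tail _ hbc ih => rw [ih, hstep _ _ hbc]
  have hfix : ∀ m, IsMiniroot T Tstar x₀ y₀ m → f m = m := fun m hm =>
    miniroot_unique (hf1 m) hm (hf2 m) (inBranch_self m)
  have hsub : {v | v ≠ s ∧ IsMiniroot T Tstar x₀ y₀ v}
      ⊆ f '' {v | v ≠ s ∧ IsMiniroot T T'' x₀ y₀ v} := by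
    rintro m ⟨hms, hmmr⟩
    obtain ⟨m'', hm''1, hm''2⟩ := exists_miniroot (T := T) (x₀ := x₀) (y₀ := y₀) T'' m
    have hcon : Hconn E ω ω' s x₀ y₀ T m'' m := inBranch_hconn' hω' hT hT'' hm''2
    have hfm : f m'' = f m := hconst _ _ hcon
    have hfm2 : f m = m := hfix m hmmr
    have hm''s : m'' ≠ s := by
      intro hrfl
      have h1 : f s = s := hfix s (root_miniroot Tstar)
      rw [hrfl] at hfm
      exact hms (by rw [← hfm2, ← hfm, h1])
    exact ⟨m'', ⟨hm''s, hm''1⟩, by rw [hfm, hfm2]⟩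
  calc {v | v ≠ s ∧ IsMiniroot T Tstar x₀ y₀ v}.ncard
      ≤ (f '' {v | v ≠ s ∧ IsMiniroot T T'' x₀ y₀ v}).ncard :=
        Set.ncard_le_ncard hsub (Set.toFinite _)
    _ ≤ {v | v ≠ s ∧ IsMiniroot T T'' x₀ y₀ v}.ncard :=
        Set.ncard_image_le (Set.toFinite _)


end DynSPT
end

section
/- Suppose θ < 0 and there exists a simple path π from y₀ to x₀ in G with length_G(π) + ω'(e₀) < 0 (equivalently, G' has a negative cycle). Then dist_G(x₀) + ω'(e₀) < dist_G(y₀). -/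
namespace DynSPT

variable {V : Type*}

variable {ω : V → V → ℝ}

lemma len_nil : len ω ([] : List V) = 0 := rfl

lemma len_singleton (a : V) : len ω [a] = 0 := rfl

lemma len_cons_cons (a b : V) (t : List V) :
    len ω (a :: b :: t) = ω a b + len ω (b :: t) := by
  simp [len, edgeList]

lemma len_append : ∀ (xs : List V) (y : V) (ys : List V),
    len ω (xs ++ y :: ys) = len ω (xs ++ [y]) + len ω (y :: ys)
  | [], y, ys => by simp [len_singleton]
  | [x], y, ys => by simp [len_cons_cons, len_singleton]
  | x :: x' :: xs, y, ys => by
      have ih := len_append (x' :: xs) y ys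
      simp only [List.cons_append, len_cons_cons] at *
      linarith

lemma getLast?_append_cons (xs : List V) (y : V) (ys : List V) :
    (xs ++ y :: ys).getLast? = (y :: ys).getLast? := by
  rw [List.getLast?_append]
  obtain ⟨v, hv⟩ := Option.isSome_iff_exists.mp (List.getLast?_isSome.mpr (by simp : y :: ys ≠ []))
  rw [hv]; rfl

lemma not_nodup_decomp : ∀ (l : List V), ¬ l.Nodup →
    ∃ (l₁ : List V) (a : V) (l₂ l₃ : List V), l = l₁ ++ a :: l₂ ++ a :: l₃
  | [], h => absurd List.nodup_nil h
  | x :: t, h => by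
      by_cases hx : x ∈ t
      · obtain ⟨l₂, l₃, rfl⟩ := List.append_of_mem hx
        exact ⟨[], x, l₂, l₃, rfl⟩
      · have ht : ¬ t.Nodup := fun hn => h (List.nodup_cons.mpr ⟨hx, hn⟩)
        obtain ⟨l₁, a, l₂, l₃, rfl⟩ := not_nodup_decomp t ht
        exact ⟨x :: l₁, a, l₂, l₃, rfl⟩

lemma reduce {E : V → V → Prop} (hG : ¬ HasNegCycle E ω) :
    ∀ (n : ℕ) (l : List V), l.length ≤ n → IsWalk E l →
    ∃ l', IsWalk E l' ∧ l'.head? = l.head? ∧ l'.getLast? = l.getLast? ∧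
      l'.Nodup ∧ len ω l' ≤ len ω l := by
  intro n
  induction n with
  | zero => intro l hl hw
            exact absurd (List.length_eq_zero_iff.mp (Nat.le_zero.mp hl)) hw.1
  | succ n ih =>
    intro l hlen hw
    by_cases hnd : l.Nodup
    · exact ⟨l, hw, rfl, rfl, hnd, le_refl _⟩
    obtain ⟨l₁, a, l₂, l₃, rfl⟩ := not_nodup_decomp l hnd
    -- chain facts
    have hch := hw.2
    rw [show l₁ ++ a :: l₂ ++ a :: l₃ = l₁ ++ ((a :: l₂) ++ a :: l₃) by simp] at hch
    rw [List.Chain', List.isChain_append] at hch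
    obtain ⟨hc1, hcm, hc12⟩ := hch
    rw [List.isChain_append] at hcm
    obtain ⟨hc2, hc3, hc23⟩ := hcm
    -- the cycle a :: l₂ ++ [a]
    have hcyc : IsCycle E ((a :: l₂) ++ [a]) := by
      refine ⟨a, ⟨⟨by simp, ?_⟩, by simp, ?_⟩, by simp⟩
      swap
      · rw [getLast?_append_cons (a :: l₂) a []]; rfl
      rw [List.Chain', List.isChain_append]
      exact ⟨hc2, List.isChain_singleton a, fun x hx y hy => by
        simp at hy; subst hy; exact hc23 x hx a (by simp)⟩
    have hcyc_nonneg : 0 ≤ len ω ((a :: l₂) ++ [a]) := by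
      by_contra hneg
      exact hG ⟨_, hcyc, lt_of_not_ge hneg⟩
    -- the reduced walk
    have hw' : IsWalk E (l₁ ++ a :: l₃) := by
      refine ⟨by simp, ?_⟩
      rw [List.Chain', List.isChain_append]
      exact ⟨hc1, hc3, fun x hx y hy => by
        simp at hy; subst hy; exact hc12 x hx a (by simp)⟩
    have hlen' : (l₁ ++ a :: l₃).length ≤ n := by
      have := hlen
      simp only [List.length_append, List.length_cons] at *
      omega
    obtain ⟨l', hw'', hh, hg, hnd', hle⟩ := ih (l₁ ++ a :: l₃) hlen' hw'
    refine ⟨l', hw'', ?_, ?_, hnd', ?_⟩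
    · rw [hh]; rcases l₁ with _ | _ <;> simp
    · rw [hg]
      rw [show l₁ ++ a :: l₂ ++ a :: l₃ = l₁ ++ a :: (l₂ ++ a :: l₃) by simp,
        getLast?_append_cons l₁ a l₃, getLast?_append_cons l₁ a (l₂ ++ a :: l₃),
        show a :: (l₂ ++ a :: l₃) = (a :: l₂) ++ a :: l₃ by simp,
        getLast?_append_cons (a :: l₂) a l₃]
    · refine hle.trans ?_
      have e1 : len ω (l₁ ++ a :: l₃) = len ω (l₁ ++ [a]) + len ω (a :: l₃) :=
        len_append l₁ a l₃
      have e2 : len ω (l₁ ++ a :: l₂ ++ a :: l₃)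
          = len ω (l₁ ++ [a]) + len ω (a :: (l₂ ++ a :: l₃)) := by
        rw [show l₁ ++ a :: l₂ ++ a :: l₃ = l₁ ++ a :: (l₂ ++ a :: l₃) by simp]
        exact len_append l₁ a (l₂ ++ a :: l₃)
      have e3 : len ω (a :: (l₂ ++ a :: l₃))
          = len ω ((a :: l₂) ++ [a]) + len ω (a :: l₃) := by
        rw [show a :: (l₂ ++ a :: l₃) = (a :: l₂) ++ a :: l₃ by simp]
        exact len_append (a :: l₂) a l₃
      rw [e1, e2, e3]; linarith

lemma walk_lengths_bddBelow [Fintype V] {E : V → V → Prop} (hG : ¬ HasNegCycle E ω)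
    (s v : V) : BddBelow {L : ℝ | ∃ l, IsWalkFrom E l s v ∧ len ω l = L} := by
  have hfin : ({l : List V | l.length ≤ Fintype.card V}).Finite :=
    List.finite_length_le V (Fintype.card V)
  have hSfin : ((len ω) '' {l : List V | l.length ≤ Fintype.card V}).Finite :=
    hfin.image _
  refine ⟨sInf ((len ω) '' {l : List V | l.length ≤ Fintype.card V}), ?_⟩
  rintro L ⟨l, ⟨hw, hh, hg⟩, rfl⟩
  obtain ⟨l', hw', hh', hg', hnd', hle⟩ := reduce hG l.length l le_rfl hw
  refine le_trans (csInf_le hSfin.bddBelow ⟨l', hnd'.length_le_card, rfl⟩) hle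

lemma concat_walk {E : V → V → Prop} {l₁ l₂ : List V} {s y x : V}
    (h1 : IsWalkFrom E l₁ s y) (h2 : IsWalkFrom E l₂ y x) :
    ∃ l, IsWalkFrom E l s x ∧ len ω l = len ω l₁ + len ω l₂ := by
  obtain ⟨⟨hne1, hc1⟩, hh1, hg1⟩ := h1
  obtain ⟨⟨hne2, hc2⟩, hh2, hg2⟩ := h2
  rcases l₂ with _ | ⟨b, t⟩
  · exact absurd rfl hne2
  have hb : b = y := by simpa using hh2
  subst hb
  rcases t with _ | ⟨c, t⟩
  · have hxy : b = x := by simpa using hg2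
    subst hxy
    exact ⟨l₁, ⟨⟨hne1, hc1⟩, hh1, hg1⟩, by simp [len_singleton]⟩
  · obtain ⟨xs, rfl⟩ : ∃ xs, l₁ = xs ++ [b] := by
      rcases List.eq_nil_or_concat l₁ with rfl | ⟨xs, z, rfl⟩
      · exact absurd rfl hne1
      · refine ⟨xs, ?_⟩
        have hz : z = b := by
          simpa [List.concat_eq_append, List.getLast?_append] using hg1
        rw [hz, List.concat_eq_append]
    refine ⟨xs ++ b :: c :: t, ⟨⟨by simp, ?_⟩, ?_, ?_⟩, ?_⟩
    · rw [List.Chain', List.isChain_append]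
      rw [List.Chain', List.isChain_append] at hc1
      exact ⟨hc1.1, hc2, fun p hp q hq => by
        simp at hq; subst hq; exact hc1.2.2 p hp b (by simp)⟩
    · rw [show xs ++ b :: c :: t = (xs ++ [b]) ++ c :: t by simp]
      rw [List.head?_append, hh1]; rfl
    · rw [getLast?_append_cons xs b (c :: t)]
      exact hg2
    · rw [len_append xs b (c :: t)]

theorem statement_14
    {V : Type*} [Fintype V] (E : V → V → Prop) (ω ω' : V → V → ℝ) (s x₀ y₀ : V)
    (hE₀ : E x₀ y₀)
    (hreach : ∀ v, ∃ l, IsWalkFrom E l s v)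
    (hω' : ∀ a b, (a, b) ≠ (x₀, y₀) → ω' a b = ω a b)
    (hG : ¬ HasNegCycle E ω)
    (hθ : ω' x₀ y₀ - ω x₀ y₀ < 0)
    (l : List V) (hl : IsWalkFrom E l y₀ x₀) (hnd : l.Nodup)
    (hneg : len ω l + ω' x₀ y₀ < 0) :
    dist E ω s x₀ + ω' x₀ y₀ < dist E ω s y₀ := by
  have hbx := walk_lengths_bddBelow hG s x₀
  have hny : {L : ℝ | ∃ p, IsWalkFrom E p s y₀ ∧ len ω p = L}.Nonempty := by
    obtain ⟨p, hp⟩ := hreach y₀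
    exact ⟨len ω p, p, hp, rfl⟩
  have key : ∀ L ∈ {L : ℝ | ∃ p, IsWalkFrom E p s y₀ ∧ len ω p = L},
      dist E ω s x₀ ≤ L + len ω l := by
    rintro L ⟨p, hp, rfl⟩
    obtain ⟨q, hq, hlenq⟩ := concat_walk hp hl
    calc dist E ω s x₀ ≤ len ω q := csInf_le hbx ⟨q, hq, rfl⟩
    _ = len ω p + len ω l := hlenq
  have h2 : dist E ω s x₀ - len ω l ≤ dist E ω s y₀ :=
    le_csInf hny (fun L hL => by linarith [key L hL])
  linarith

end DynSPT
end
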